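/- The number α₀ satisfies 2 < α₀ < 3 and solves the decoupling equation cos(πα₀) = (1 − sin(πα₀/2))/2. -/
import Mathlib


/-- The special neglecton parameter `α₀ = 2 − (2/π)·arcsin((1−√17)/8) ≈ 2.2553` at which
the computational subspace decouples exactly from the negative-norm direction. -/
noncomputable def alpha0 : ℝ :=
  2 - (2 / Real.pi) * Real.arcsin ((1 - Real.sqrt 17) / 8)

/-- `α₀` lies in `(2,3)` and solves the decoupling equation
`cos(πα₀) = (1 − sin(πα₀/2))/2`. -/
theorem alpha0_decoupling :
    2 < alpha0 ∧ alpha0 < 3 ∧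
      Real.cos (Real.pi * alpha0) = (1 - Real.sin (Real.pi * alpha0 / 2)) / 2 := by
  have hpi := Real.pi_pos
  have h17 : Real.sqrt 17 ^ 2 = 17 := Real.sq_sqrt (by norm_num)
  have h17n := Real.sqrt_nonneg 17
  set s : ℝ := (1 - Real.sqrt 17) / 8 with hs
  have hs0 : s < 0 := by nlinarith
  have hs1 : -1 < s := by nlinarith
  have hθ := Real.arcsin_pos.not.mpr (by linarith : ¬ (0:ℝ) < s)
  have hθneg : Real.arcsin s ≤ 0 := le_of_not_gt (by simpa using hθ)
  have hθneg' : Real.arcsin s < 0 := by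
    rcases lt_or_eq_of_le hθneg with h | h
    · exact h
    · exfalso
      have := Real.arcsin_nonneg.mp h.ge
      linarith
  have hθlo : -(Real.pi / 2) < Real.arcsin s := Real.neg_pi_div_two_lt_arcsin.mpr hs1
  have hsin : Real.sin (Real.arcsin s) = s := Real.sin_arcsin hs1.le (by linarith)
  set θ := Real.arcsin s with hθdef
  have ha : alpha0 = 2 - (2 / Real.pi) * θ := rfl
  refine ⟨?_, ?_, ?_⟩
  · rw [ha]
    have : 0 < (2 / Real.pi) * (-θ) := by
      apply mul_pos (by positivity); linarith
    nlinarith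
  · rw [ha]
    have h2 : -θ * 2 / Real.pi < 1 := (div_lt_one hpi).mpr (by linarith)
    have h3 : 2 / Real.pi * θ = -(-θ * 2 / Real.pi) := by ring
    linarith
  · have hπa : Real.pi * alpha0 = -(2 * θ) + 2 * Real.pi := by
      rw [ha]; field_simp; ring
    have hcos : Real.cos (Real.pi * alpha0) = Real.cos (2 * θ) := by
      rw [hπa, Real.cos_add_two_pi, Real.cos_neg]
    have hhalf : Real.pi * alpha0 / 2 = Real.pi - θ := by
      rw [ha]; field_simp
    have hpyth := Real.sin_sq_add_cos_sq θ
    rw [hcos, hhalf, Real.sin_pi_sub, hsin, Real.cos_two_mul']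
    rw [hsin] at hpyth ⊢
    rw [hs] at hpyth ⊢
    nlinarith
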